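/- arXiv:1612.05443 — 3 statements merged into one kernel-verified Lean document; each statement's English description precedes it below -/
import Mathlib

section
/- Let ϑ > 0, κ ≥ 0, μ ≥ 0, ν ≥ 0 and r ≥ 0 be real numbers, let A be a real 3×3 matrix, let t, w ∈ ℝ³, let Y = (Y₁,…,Yₙ) ∈ ℝⁿ with Y_k > 0 for every k, let D = (D_{kl}) be a symmetric positive semidefinite real n×n matrix with D Y = 0, and let G₁,…,Gₙ ∈ ℝ³. Define the Newtonian stress S(A) = μ(A + Aᵀ − (2/3)(tr A) I) + ν (tr A) I and the diffusion fluxes F_k = −Y_k ∑_{l=1}^n D_{kl} G_l. Then the entropy production rate σ := S(A):A/ϑ + κ|t|²/ϑ² − ∑_{k=1}^n F_k · (G_k/Y_k + w) + r/ϑ is nonnegative. -/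
open Matrix

/-! Each term of `σ` has a sign. For the stress,
`(A + Aᵀ - c (tr A) I) : A = ½|A + Aᵀ|² - c (tr A)²`, and keeping only the diagonal of
`|A + Aᵀ|²` and applying Cauchy–Schwarz gives `½|A + Aᵀ|² ≥ (2/d) (tr A)²`; so the deviatoric
part is nonnegative as soon as `c ≤ 2/d`, which is exactly `c = 2/3` in dimension 3.
For diffusion, the symmetry of `D` turns `D Y = 0` into `Yᵀ D = 0`, which annihilates
`∑ₖ Fₖ · w = -(Yᵀ D G) · w`; what remains is `-∑_c g_c · D g_c` with `g_c = (G_k c)_k`,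
nonpositive by semidefiniteness. -/

section Viscous

variable {ι : Type*} [Fintype ι]

theorem sum_sum_add_transpose_mul_self (A : Matrix ι ι ℝ) :
    ∑ i, ∑ j, (A + Aᵀ) i j * A i j = (∑ i, ∑ j, (A i j + A j i) ^ 2) / 2 := by
  have hswap : ∑ i, ∑ j, (A i j + A j i) * A j i = ∑ i, ∑ j, (A i j + A j i) * A i j := by
    rw [Finset.sum_comm]
    simp only [add_comm]
  have hsq : ∑ i, ∑ j, (A i j + A j i) ^ 2
      = ∑ i, ∑ j, (A i j + A j i) * A i j + ∑ i, ∑ j, (A i j + A j i) * A j i := by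
    simp only [← Finset.sum_add_distrib]
    congr! 2; ring
  rw [hsq, hswap]
  simp only [Matrix.add_apply, transpose_apply]
  ring

theorem four_mul_sum_diag_sq_le (A : Matrix ι ι ℝ) :
    4 * ∑ i, A i i ^ 2 ≤ ∑ i, ∑ j, (A i j + A j i) ^ 2 := by
  rw [Finset.mul_sum]
  refine Finset.sum_le_sum fun i _ => ?_
  calc 4 * A i i ^ 2 = (A i i + A i i) ^ 2 := by ring
    _ ≤ ∑ j, (A i j + A j i) ^ 2 :=
      Finset.single_le_sum (f := fun j => (A i j + A j i) ^ 2) (fun _ _ => sq_nonneg _)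
        (Finset.mem_univ i)

variable [DecidableEq ι]

theorem sum_sum_smul_one_mul (a : ℝ) (A : Matrix ι ι ℝ) :
    ∑ i, ∑ j, (a • (1 : Matrix ι ι ℝ)) i j * A i j = a * A.trace := by
  simp [Matrix.one_apply, Matrix.trace, Finset.mul_sum]

theorem sum_sum_deviatoric_mul_self_nonneg {c : ℝ} (hc : c * Fintype.card ι ≤ 2)
    (A : Matrix ι ι ℝ) :
    0 ≤ ∑ i, ∑ j, (A + Aᵀ - (c * A.trace) • (1 : Matrix ι ι ℝ)) i j * A i j := by
  have hlin : ∑ i, ∑ j, (A + Aᵀ - (c * A.trace) • (1 : Matrix ι ι ℝ)) i j * A i j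
      = ∑ i, ∑ j, (A + Aᵀ) i j * A i j - c * A.trace * A.trace := by
    simp only [Matrix.sub_apply, sub_mul, Finset.sum_sub_distrib, sum_sum_smul_one_mul]
  rw [hlin, sum_sum_add_transpose_mul_self]
  have hdiag := four_mul_sum_diag_sq_le A
  have htr : A.trace ^ 2 ≤ Fintype.card ι * ∑ i, A i i ^ 2 := sq_sum_le_card_mul_sum_sq
  have hS : 0 ≤ ∑ i, A i i ^ 2 := Finset.sum_nonneg fun _ _ => sq_nonneg _
  rcases le_or_gt c 0 with hc0 | hc0
  · nlinarith [sq_nonneg A.trace]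
  · nlinarith [mul_le_mul_of_nonneg_left htr hc0.le]

end Viscous

noncomputable def newtonianStress (μ ν : ℝ) (A : Matrix (Fin 3) (Fin 3) ℝ) :
    Matrix (Fin 3) (Fin 3) ℝ :=
  μ • (A + Aᵀ - ((2 / 3 : ℝ) * A.trace) • (1 : Matrix (Fin 3) (Fin 3) ℝ))
    + (ν * A.trace) • (1 : Matrix (Fin 3) (Fin 3) ℝ)

theorem sum_sum_newtonianStress_mul_self_nonneg {μ ν : ℝ} (hμ : 0 ≤ μ) (hν : 0 ≤ ν)
    (A : Matrix (Fin 3) (Fin 3) ℝ) :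
    0 ≤ ∑ i, ∑ j, newtonianStress μ ν A i j * A i j := by
  have hsplit : ∑ i, ∑ j, newtonianStress μ ν A i j * A i j
      = μ * ∑ i, ∑ j, (A + Aᵀ - ((2 / 3 : ℝ) * A.trace) • (1 : Matrix (Fin 3) (Fin 3) ℝ)) i j
          * A i j + ∑ i, ∑ j, ((ν * A.trace) • (1 : Matrix (Fin 3) (Fin 3) ℝ)) i j * A i j := by
    simp only [newtonianStress, Matrix.add_apply, Matrix.smul_apply, smul_eq_mul, add_mul,
      mul_assoc, Finset.sum_add_distrib, ← Finset.mul_sum]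
  have hdev := sum_sum_deviatoric_mul_self_nonneg (c := 2 / 3) (by norm_num) A
  rw [hsplit, sum_sum_smul_one_mul, mul_assoc]
  have := mul_self_nonneg A.trace
  positivity

section Diffusion

variable {n m : Type*} [Fintype n] [Fintype m]

def diffusionFlux (D : Matrix n n ℝ) (Y : n → ℝ) (G : n → m → ℝ) (k : n) : m → ℝ :=
  -(Y k) • ∑ l, D k l • G l

theorem sum_smul_dotProduct_eq_mulVec (D : Matrix n n ℝ) (G : n → m → ℝ) (v : m → ℝ) (k : n) :
    (∑ l, D k l • G l) ⬝ᵥ v = (D *ᵥ fun l => G l ⬝ᵥ v) k := by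
  rw [sum_dotProduct]
  simp only [smul_dotProduct, smul_eq_mul]
  rfl

theorem sum_mul_sum_smul_dotProduct (D : Matrix n n ℝ) (x : n → ℝ) (G : n → m → ℝ)
    (v : m → ℝ) :
    ∑ k, x k * ((∑ l, D k l • G l) ⬝ᵥ v) = (x ᵥ* D) ⬝ᵥ fun l => G l ⬝ᵥ v := by
  simp only [sum_smul_dotProduct_eq_mulVec, ← dotProduct_mulVec]
  rfl

theorem sum_sum_smul_dotProduct (D : Matrix n n ℝ) (G : n → m → ℝ) :
    ∑ k, (∑ l, D k l • G l) ⬝ᵥ G k = ∑ c, (fun k => G k c) ⬝ᵥ D *ᵥ fun k => G k c := by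
  simp only [dotProduct, mulVec, Finset.sum_apply, Pi.smul_apply, smul_eq_mul,
    Finset.sum_mul, Finset.mul_sum]
  rw [Finset.sum_comm]
  exact Finset.sum_congr rfl fun c _ => Finset.sum_congr rfl fun k _ =>
    Finset.sum_congr rfl fun l _ => by ring

theorem diffusionFlux_dotProduct {D : Matrix n n ℝ} {Y : n → ℝ} {k : n} (hY : Y k ≠ 0)
    (G : n → m → ℝ) (w : m → ℝ) :
    diffusionFlux D Y G k ⬝ᵥ ((Y k)⁻¹ • G k + w)
      = -((∑ l, D k l • G l) ⬝ᵥ G k) - Y k * ((∑ l, D k l • G l) ⬝ᵥ w) := by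
  rw [diffusionFlux, dotProduct_add, neg_smul, neg_dotProduct, neg_dotProduct, smul_dotProduct,
    smul_dotProduct, dotProduct_smul, smul_eq_mul, smul_eq_mul, smul_eq_mul, mul_inv_cancel_left₀ hY]
  ring

theorem sum_diffusionFlux_dotProduct {D : Matrix n n ℝ} {Y : n → ℝ} (hY : ∀ k, Y k ≠ 0)
    (hDY : Y ᵥ* D = 0) (G : n → m → ℝ) (w : m → ℝ) :
    ∑ k, diffusionFlux D Y G k ⬝ᵥ ((Y k)⁻¹ • G k + w)
      = -∑ c, (fun k => G k c) ⬝ᵥ D *ᵥ fun k => G k c := by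
  simp only [diffusionFlux_dotProduct (hY _), Finset.sum_sub_distrib, Finset.sum_neg_distrib,
    sum_mul_sum_smul_dotProduct, hDY, zero_dotProduct, sub_zero, sum_sum_smul_dotProduct]

theorem sum_diffusionFlux_dotProduct_nonpos {D : Matrix n n ℝ} {Y : n → ℝ}
    (hsymm : D.IsSymm) (hpsd : ∀ x : n → ℝ, 0 ≤ x ⬝ᵥ D *ᵥ x) (hDY : D *ᵥ Y = 0)
    (hY : ∀ k, Y k ≠ 0) (G : n → m → ℝ) (w : m → ℝ) :
    ∑ k, diffusionFlux D Y G k ⬝ᵥ ((Y k)⁻¹ • G k + w) ≤ 0 := by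
  have hYD : Y ᵥ* D = 0 := by rw [← hsymm.eq, vecMul_transpose, hDY]
  rw [sum_diffusionFlux_dotProduct hY hYD, neg_nonpos]
  exact Finset.sum_nonneg fun c _ => hpsd _

end Diffusion

theorem entropy_production_nonneg_general (n : ℕ)
    (ϑ κ μ ν r : ℝ) (hϑ : 0 < ϑ) (hκ : 0 ≤ κ) (hμ : 0 ≤ μ) (hν : 0 ≤ ν) (hr : 0 ≤ r)
    (A : Matrix (Fin 3) (Fin 3) ℝ) (t w : Fin 3 → ℝ)
    (Y : Fin n → ℝ) (hY : ∀ k, 0 < Y k) (G : Fin n → (Fin 3 → ℝ))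
    (D : Matrix (Fin n) (Fin n) ℝ) (hsymm : D.IsSymm)
    (hpsd : ∀ x : Fin n → ℝ, 0 ≤ x ⬝ᵥ D.mulVec x)
    (hker : D.mulVec Y = 0) :
    0 ≤ (∑ i, ∑ j,
          (μ • (A + Aᵀ - ((2 / 3 : ℝ) * A.trace) • (1 : Matrix (Fin 3) (Fin 3) ℝ))
            + (ν * A.trace) • (1 : Matrix (Fin 3) (Fin 3) ℝ)) i j * A i j) / ϑ
        + κ * (t ⬝ᵥ t) / ϑ ^ 2
        - (∑ k, (-(Y k) • ∑ l, D k l • G l) ⬝ᵥ ((Y k)⁻¹ • G k + w))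
        + r / ϑ := by
  change 0 ≤ (∑ i, ∑ j, newtonianStress μ ν A i j * A i j) / ϑ + κ * (t ⬝ᵥ t) / ϑ ^ 2
    - (∑ k, diffusionFlux D Y G k ⬝ᵥ ((Y k)⁻¹ • G k + w)) + r / ϑ
  have hviscous := div_nonneg (sum_sum_newtonianStress_mul_self_nonneg hμ hν A) hϑ.le
  have hheat : 0 ≤ κ * (t ⬝ᵥ t) / ϑ ^ 2 := by
    have : 0 ≤ t ⬝ᵥ t := by simpa using dotProduct_star_self_nonneg t
    positivity
  have hdiffusion :=
    sum_diffusionFlux_dotProduct_nonpos hsymm hpsd hker (fun k => (hY k).ne') G w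
  have hreaction : 0 ≤ r / ϑ := div_nonneg hr hϑ.le
  linarith

/-- Nonnegativity of the entropy production rate
`σ = S(A):A/ϑ + κ|t|²/ϑ² − ∑_k F_k · (G_k/Y_k + w) + r/ϑ`, where
`S(A) = μ(A + Aᵀ − (2/3)(tr A) I) + ν (tr A) I` is the Newtonian stress and
`F_k = −Y_k ∑_l D_{kl} G_l` are the diffusion fluxes, with `D` symmetric positive
semidefinite and `D Y = 0`, `Y_k > 0`. -/
theorem entropy_production_nonneg (n : ℕ) (hn : 1 ≤ n)
    (ϑ κ μ ν r : ℝ) (hϑ : 0 < ϑ) (hκ : 0 ≤ κ) (hμ : 0 ≤ μ) (hν : 0 ≤ ν) (hr : 0 ≤ r)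
    (A : Matrix (Fin 3) (Fin 3) ℝ) (t w : Fin 3 → ℝ)
    (Y : Fin n → ℝ) (hY : ∀ k, 0 < Y k) (G : Fin n → (Fin 3 → ℝ))
    (D : Matrix (Fin n) (Fin n) ℝ) (hsymm : D.IsSymm)
    (hpsd : ∀ x : Fin n → ℝ, 0 ≤ x ⬝ᵥ D.mulVec x)
    (hker : D.mulVec Y = 0) :
    0 ≤ (∑ i, ∑ j,
          (μ • (A + Aᵀ - ((2 / 3 : ℝ) * A.trace) • (1 : Matrix (Fin 3) (Fin 3) ℝ))
            + (ν * A.trace) • (1 : Matrix (Fin 3) (Fin 3) ℝ)) i j * A i j) / ϑ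
        + κ * (t ⬝ᵥ t) / ϑ ^ 2
        - (∑ k, (-(Y k) • ∑ l, D k l • G l) ⬝ᵥ ((Y k)⁻¹ • G k + w))
        + r / ϑ :=
  entropy_production_nonneg_general n ϑ κ μ ν r hϑ hκ hμ hν hr A t w Y hY G D hsymm hpsd hker
end

section
/- Let Ω ⊂ ℝᴺ be a bounded Lebesgue-measurable set. Let (f_n), (g_n) be sequences of integrable functions on Ω and let f, g, h be integrable functions on Ω such that f_n g_n is integrable for every n. Assume: (i) ∫_Ω |f_n − f| dx → 0; (ii) ∫_Ω g_n φ dx → ∫_Ω g φ dx for every bounded measurable φ : Ω → ℝ; (iii) ∫_Ω f_n g_n φ dx → ∫_Ω h φ dx for every bounded measurable φ : Ω → ℝ. Then h = f g almost everywhere in Ω. -/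
/-!
A weakly convergent sequence is bounded (Banach–Steinhaus in the dual of `L^∞`), so `g n` is
bounded in `L¹`. Along a subsequence `f n → f₀` a.e., hence, by Egorov, uniformly off a set of
small measure. On a measurable `B` inside the good set where moreover `|f₀| ≤ k`, the difference
`∫_B f n g n - ∫_B f₀ g n = ∫_B (f n - f₀) g n` is at most `sup_B |f n - f₀| · ‖g n‖₁ → 0`, so
`∫_B h = ∫_B f₀ g₀` for all such `B` and `h = f₀ g₀` a.e. there. Letting `k → ∞` and the
exceptional measure tend to `0` gives the claim.
-/

open MeasureTheory Filter Topology
open scoped ENNReal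

variable {α : Type*} [MeasurableSpace α] {μ : Measure α}

lemma MeasureTheory.Lp.exists_measurable_abs_le_norm (φ : Lp ℝ ∞ μ) :
    ∃ ψ : α → ℝ, Measurable ψ ∧ (∀ x, |ψ x| ≤ ‖φ‖) ∧ φ =ᵐ[μ] ψ := by
  have hbound : ∀ᵐ x ∂μ, |φ x| ≤ ‖φ‖ := by
    simpa only [Lp.norm_def, toReal_eLpNorm (Lp.aestronglyMeasurable φ), Real.norm_eq_abs]
      using ae_le_lpNorm_exponent_top (Lp.memLp φ)
  obtain ⟨φ', hφ'm, hφφ'⟩ := (Lp.aestronglyMeasurable φ).aemeasurable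
  let S := {x | |φ' x| ≤ ‖φ‖}
  refine ⟨S.indicator φ', hφ'm.indicator (measurableSet_le hφ'm.abs measurable_const),
    fun x => ?_, ?_⟩
  · by_cases hx : x ∈ S
    · rw [Set.indicator_of_mem hx]
      exact hx
    · simp [Set.indicator_of_notMem hx]
  · filter_upwards [hbound, hφφ'] with x hx hxx
    rw [hxx] at hx ⊢
    exact (Set.indicator_of_mem (s := S) hx φ').symm

lemma exists_Lp_top_norm_le_one_integral_mul_eq {g : α → ℝ} (hg : AEMeasurable g μ) :
    ∃ Φ : Lp ℝ ∞ μ, ‖Φ‖ ≤ 1 ∧ ∫ x, g x * Φ x ∂μ = ∫ x, |g x| ∂μ := by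
  obtain ⟨G, hGm, hgG⟩ := hg
  let s : α → ℝ := fun x => if 0 ≤ G x then 1 else -1
  have hsb : ∀ x, ‖s x‖ ≤ 1 := fun x => by unfold s; split_ifs <;> simp
  have hs : MemLp s ∞ μ :=
    memLp_top_of_bound (Measurable.ite (measurableSet_le measurable_const hGm)
      measurable_const measurable_const).aestronglyMeasurable 1 (.of_forall hsb)
  refine ⟨hs.toLp s, ?_, integral_congr_ae ?_⟩
  · rw [Lp.norm_toLp, eLpNorm_exponent_top]
    exact ENNReal.toReal_le_of_le_ofReal zero_le_one
      (eLpNormEssSup_le_of_ae_bound (.of_forall hsb))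
  · filter_upwards [hgG, hs.coeFn_toLp] with x hx hsx
    rw [hx, hsx]
    unfold s; split_ifs with h
    · rw [mul_one, abs_of_nonneg h]
    · rw [mul_neg_one, abs_of_neg (not_le.1 h)]

/-- Uniform boundedness principle for `L¹`, viewed inside the dual of `L^∞`. -/
lemma exists_integral_abs_le_of_forall_bounded {ι : Type*} {g : ι → α → ℝ}
    (hg : ∀ i, Integrable (g i) μ)
    (hbdd : ∀ φ : α → ℝ, Measurable φ → (∃ C, ∀ x, |φ x| ≤ C) →
      ∃ C, ∀ i, |∫ x, g i x * φ x ∂μ| ≤ C) :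
    ∃ M, ∀ i, ∫ x, |g i x| ∂μ ≤ M := by
  let T : ι → Lp ℝ ∞ μ →L[ℝ] ℝ := fun i =>
    (ContinuousLinearMap.mul ℝ ℝ).lpPairing μ 1 ∞ (hg i).toL1
  have hT : ∀ i (φ : α → ℝ) (Φ : Lp ℝ ∞ μ), Φ =ᵐ[μ] φ → T i Φ = ∫ x, g i x * φ x ∂μ := by
    intro i φ Φ hΦ
    refine (ContinuousLinearMap.lpPairing_eq_integral _ _ _).trans (integral_congr_ae ?_)
    filter_upwards [(hg i).coeFn_toL1, hΦ] with x hx hΦx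
    rw [ContinuousLinearMap.mul_apply', hx, hΦx]
  obtain ⟨C, hC⟩ := banach_steinhaus (g := T) fun Φ => by
    obtain ⟨φ, hφ, hφb, hΦφ⟩ := Lp.exists_measurable_abs_le_norm Φ
    obtain ⟨C, hC⟩ := hbdd φ hφ ⟨_, hφb⟩
    exact ⟨C, fun i => by rw [hT i φ Φ hΦφ]; exact hC i⟩
  refine ⟨C, fun i => ?_⟩
  obtain ⟨Φ, hΦ, hgΦ⟩ := exists_Lp_top_norm_le_one_integral_mul_eq (hg i).1.aemeasurable
  calc ∫ x, |g i x| ∂μ = T i Φ := by rw [hT i Φ Φ .rfl, hgΦ]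
    _ ≤ ‖T i Φ‖ := le_abs_self _
    _ ≤ C * ‖Φ‖ := (T i).le_of_opNorm_le (hC i) _
    _ ≤ C := mul_le_of_le_one_right ((norm_nonneg _).trans (hC i)) hΦ

lemma tendstoInMeasure_of_tendsto_integral_abs_sub {ι : Type*} {l : Filter ι}
    {f : ι → α → ℝ} {f₀ : α → ℝ} (hf : ∀ i, Integrable (f i) μ) (hf₀ : Integrable f₀ μ)
    (h : Tendsto (fun i => ∫ x, |f i x - f₀ x| ∂μ) l (𝓝 0)) : TendstoInMeasure μ f l f₀ := by
  refine tendstoInMeasure_of_tendsto_eLpNorm one_ne_zero (fun i => (hf i).1) hf₀.1 ?_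
  have heq : ∀ i, eLpNorm (f i - f₀) 1 μ = ENNReal.ofReal (∫ x, |f i x - f₀ x| ∂μ) := fun i => by
    rw [eLpNorm_one_eq_lintegral_enorm, ← ofReal_integral_norm_eq_lintegral_enorm
      ((hf i).sub hf₀)]
    rfl
  simpa only [heq, ENNReal.ofReal_zero] using ENNReal.tendsto_ofReal h

lemma ae_of_forall_exists_measure_compl_le {P : α → Prop}
    (h : ∀ ε : ℝ, 0 < ε → ∃ S : Set α, μ Sᶜ ≤ ENNReal.ofReal ε ∧ ∀ᵐ x ∂μ, x ∈ S → P x) :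
    ∀ᵐ x ∂μ, P x := by
  rw [ae_iff]
  refine nonpos_iff_eq_zero.1 (ENNReal.le_of_forall_pos_le_add fun ε hε _ => ?_)
  obtain ⟨S, hSμ, hS⟩ := h ε hε
  calc μ {x | ¬P x} ≤ μ (Sᶜ ∪ {x | ¬(x ∈ S → P x)}) :=
        measure_mono fun x hx => by by_cases hxS : x ∈ S <;> simp_all
    _ ≤ μ Sᶜ + μ {x | ¬(x ∈ S → P x)} := measure_union_le _ _
    _ ≤ 0 + ε := by rwa [ae_iff.1 hS, add_zero, zero_add, ← ENNReal.ofReal_coe_nnreal]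

def TendstoEssUniformlyOn {ι : Type*} (μ : Measure α) (f : ι → α → ℝ) (f₀ : α → ℝ)
    (l : Filter ι) (S : Set α) : Prop :=
  ∀ δ > 0, ∀ᶠ i in l, ∀ᵐ x ∂μ, x ∈ S → |f i x - f₀ x| ≤ δ

lemma TendstoEssUniformlyOn.mono {ι : Type*} {f : ι → α → ℝ} {f₀ : α → ℝ} {l : Filter ι}
    {S T : Set α} (h : TendstoEssUniformlyOn μ f f₀ l S) (hTS : T ⊆ S) :
    TendstoEssUniformlyOn μ f f₀ l T :=
  fun δ hδ => (h δ hδ).mono fun _ hi => hi.mono fun _ hx hxT => hx (hTS hxT)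

/-- Egorov's theorem. -/
lemma exists_measure_compl_le_tendstoEssUniformlyOn [IsFiniteMeasure μ] {f : ℕ → α → ℝ}
    {f₀ : α → ℝ} (hf : ∀ n, AEStronglyMeasurable (f n) μ) (hf₀ : StronglyMeasurable f₀)
    (hlim : ∀ᵐ x ∂μ, Tendsto (fun n => f n x) atTop (𝓝 (f₀ x))) {ε : ℝ} (hε : 0 < ε) :
    ∃ S, MeasurableSet S ∧ μ Sᶜ ≤ ENNReal.ofReal ε ∧ TendstoEssUniformlyOn μ f f₀ atTop S := by
  have hfF : ∀ᵐ x ∂μ, ∀ n, f n x = (hf n).mk (f n) x := ae_all_iff.2 fun n => (hf n).ae_eq_mk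
  obtain ⟨t, ht, htμ, hunif⟩ := tendstoUniformlyOn_of_ae_tendsto'
    (fun n => (hf n).stronglyMeasurable_mk) hf₀
    (by filter_upwards [hlim, hfF] with x hx hxF using hx.congr hxF) hε
  refine ⟨tᶜ, ht.compl, by rwa [compl_compl], fun δ hδ => ?_⟩
  filter_upwards [Metric.tendstoUniformlyOn_iff.1 hunif δ hδ] with n hn
  filter_upwards [hfF] with x hxF hx
  rw [hxF n, ← Real.dist_eq, dist_comm]
  exact (hn x hx).le

lemma abs_setIntegral_mul_sub_le {u v w : α → ℝ} {B : Set α} (hB : MeasurableSet B) {δ : ℝ}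
    (hδ : 0 ≤ δ) (hu : AEStronglyMeasurable u μ) (hv : AEStronglyMeasurable v μ)
    (hw : Integrable w μ) (hvw : IntegrableOn (fun x => v x * w x) B μ)
    (huv : ∀ᵐ x ∂μ, x ∈ B → |u x - v x| ≤ δ) :
    |∫ x in B, u x * w x ∂μ - ∫ x in B, v x * w x ∂μ| ≤ δ * ∫ x, |w x| ∂μ := by
  have huv' : ∀ᵐ x ∂μ.restrict B, |u x - v x| ≤ δ := (ae_restrict_iff' hB).2 huv
  have hdiff : IntegrableOn (fun x => (u x - v x) * w x) B μ :=
    hw.integrableOn.bdd_mul (hu.sub hv).restrict huv'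
  have hsplit : ∫ x in B, u x * w x ∂μ =
      ∫ x in B, (u x - v x) * w x ∂μ + ∫ x in B, v x * w x ∂μ := by
    rw [← integral_add hdiff hvw]
    simp only [sub_mul, sub_add_cancel]
  rw [hsplit, add_sub_cancel_right]
  calc |∫ x in B, (u x - v x) * w x ∂μ| ≤ ∫ x in B, |(u x - v x) * w x| ∂μ :=
        abs_integral_le_integral_abs
    _ ≤ ∫ x in B, δ * |w x| ∂μ := by
        refine integral_mono_ae hdiff.abs (hw.integrableOn.abs.const_mul δ) ?_
        filter_upwards [huv'] with x hx
        rw [abs_mul]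
        exact mul_le_mul_of_nonneg_right hx (abs_nonneg _)
    _ = δ * ∫ x in B, |w x| ∂μ := integral_const_mul _ _
    _ ≤ δ * ∫ x, |w x| ∂μ :=
        mul_le_mul_of_nonneg_left
          (setIntegral_le_integral hw.abs (.of_forall fun _ => abs_nonneg _)) hδ

/-- Weak convergence in `L¹(μ)`, with `L^∞` represented by bounded measurable functions. -/
def TendstoWeaklyL1 {ι : Type*} (μ : Measure α) (l : Filter ι) (g : ι → α → ℝ) (g₀ : α → ℝ) :
    Prop :=
  ∀ φ : α → ℝ, Measurable φ → (∃ C, ∀ x, |φ x| ≤ C) →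
    Tendsto (fun i => ∫ x, g i x * φ x ∂μ) l (𝓝 (∫ x, g₀ x * φ x ∂μ))

namespace TendstoWeaklyL1

variable {ι : Type*} {l : Filter ι} {f g : ι → α → ℝ} {f₀ g₀ h : α → ℝ}

lemma comp_tendsto {κ : Type*} {l' : Filter κ} (hg : TendstoWeaklyL1 μ l g g₀) {u : κ → ι}
    (hu : Tendsto u l' l) : TendstoWeaklyL1 μ l' (fun k => g (u k)) g₀ :=
  fun φ hφ hφb => (hg φ hφ hφb).comp hu

lemma exists_integral_abs_le {g : ℕ → α → ℝ} (hg : ∀ n, Integrable (g n) μ)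
    (hweak : TendstoWeaklyL1 μ atTop g g₀) : ∃ M, ∀ n, ∫ x, |g n x| ∂μ ≤ M := by
  refine exists_integral_abs_le_of_forall_bounded hg fun φ hφ hφb => ?_
  obtain ⟨C, hC⟩ := (hweak φ hφ hφb).abs.bddAbove_range
  exact ⟨C, fun n => hC ⟨n, rfl⟩⟩

lemma tendsto_setIntegral_mul (hg : TendstoWeaklyL1 μ l g g₀) {B : Set α} (hB : MeasurableSet B)
    {v : α → ℝ} (hv : Measurable v) {K : ℝ} (hvB : ∀ x ∈ B, |v x| ≤ K) :
    Tendsto (fun i => ∫ x in B, v x * g i x ∂μ) l (𝓝 (∫ x in B, v x * g₀ x ∂μ)) := by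
  have hmul : ∀ w : α → ℝ, ∫ x, w x * B.indicator v x ∂μ = ∫ x in B, v x * w x ∂μ := by
    intro w
    rw [← integral_indicator hB]
    congr 1
    ext x
    by_cases hx : x ∈ B <;> simp [hx, mul_comm]
  have hφb : ∀ x, |B.indicator v x| ≤ |K| := by
    intro x
    by_cases hx : x ∈ B
    · simpa [hx] using (hvB x hx).trans (le_abs_self K)
    · simp [hx]
  simpa only [hmul] using hg _ (hv.indicator hB) ⟨_, hφb⟩

lemma setIntegral_eq_setIntegral_mul [l.NeBot] {B : Set α} (hB : MeasurableSet B)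
    (hf : ∀ i, AEStronglyMeasurable (f i) μ) (hf₀ : Measurable f₀) {K : ℝ}
    (hf₀B : ∀ x ∈ B, |f₀ x| ≤ K) (hg : ∀ i, Integrable (g i) μ) {M : ℝ}
    (hM : ∀ i, ∫ x, |g i x| ∂μ ≤ M) (hunif : TendstoEssUniformlyOn μ f f₀ l B)
    (hweakg : TendstoWeaklyL1 μ l g g₀)
    (hweakfg : TendstoWeaklyL1 μ l (fun i x => f i x * g i x) h) :
    ∫ x in B, h x ∂μ = ∫ x in B, f₀ x * g₀ x ∂μ := by
  have hlim := ((hweakfg.tendsto_setIntegral_mul hB (v := fun _ => 1) measurable_const (K := 1)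
    (fun _ _ => by simp)).sub (hweakg.tendsto_setIntegral_mul hB hf₀ hf₀B)).abs
  simp only [one_mul] at hlim
  have hf₀g : ∀ i, IntegrableOn (fun x => f₀ x * g i x) B μ := fun i =>
    (hg i).integrableOn.bdd_mul hf₀.aestronglyMeasurable.restrict
      ((ae_restrict_iff' hB).2 (.of_forall hf₀B))
  have hdefect : ∀ δ > 0, |∫ x in B, h x ∂μ - ∫ x in B, f₀ x * g₀ x ∂μ| ≤ δ * M :=
    fun δ hδ => le_of_tendsto hlim <| (hunif δ hδ).mono fun i hi =>
      (abs_setIntegral_mul_sub_le hB hδ.le (hf i) hf₀.aestronglyMeasurable (hg i) (hf₀g i)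
        hi).trans (mul_le_mul_of_nonneg_left (hM i) hδ.le)
  have hδM : Tendsto (fun δ : ℝ => δ * M) (𝓝[>] 0) (𝓝 0) := by
    simpa using (tendsto_id.mul_const M).mono_left (nhdsWithin_le_nhds (a := (0 : ℝ)))
  have hzero : |∫ x in B, h x ∂μ - ∫ x in B, f₀ x * g₀ x ∂μ| ≤ 0 :=
    ge_of_tendsto hδM (eventually_nhdsWithin_of_forall hdefect)
  exact sub_eq_zero.1 (abs_nonpos_iff.1 hzero)

lemma ae_eq_mul [l.NeBot] {S : Set α} (hS : MeasurableSet S)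
    (hf : ∀ i, AEStronglyMeasurable (f i) μ) (hf₀ : Measurable f₀) (hg : ∀ i, Integrable (g i) μ)
    (hg₀ : Integrable g₀ μ) (hh : Integrable h μ) {M : ℝ} (hM : ∀ i, ∫ x, |g i x| ∂μ ≤ M)
    (hunif : TendstoEssUniformlyOn μ f f₀ l S) (hweakg : TendstoWeaklyL1 μ l g g₀)
    (hweakfg : TendstoWeaklyL1 μ l (fun i x => f i x * g i x) h) :
    ∀ᵐ x ∂μ, x ∈ S → h x = f₀ x * g₀ x := by
  have hbdd : ∀ k : ℕ, ∀ᵐ x ∂μ, x ∈ S ∩ {x | |f₀ x| ≤ k} → h x = f₀ x * g₀ x := by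
    intro k
    have hSk : MeasurableSet (S ∩ {x | |f₀ x| ≤ k}) :=
      hS.inter (measurableSet_le hf₀.abs measurable_const)
    rw [← ae_restrict_iff' hSk]
    refine Integrable.ae_eq_of_forall_setIntegral_eq _ _ hh.integrableOn
      (hg₀.integrableOn.bdd_mul hf₀.aestronglyMeasurable.restrict
        ((ae_restrict_iff' hSk).2 (.of_forall fun x hx => hx.2))) fun B hB _ => ?_
    rw [Measure.restrict_restrict hB]
    exact setIntegral_eq_setIntegral_mul (hB.inter hSk) hf hf₀ (fun x hx => hx.2.2) hg hM
      (hunif.mono fun x hx => hx.2.1) hweakg hweakfg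
  filter_upwards [ae_all_iff.2 hbdd] with x hx hxS
  obtain ⟨k, hk⟩ := exists_nat_ge |f₀ x|
  exact hx k ⟨hxS, hk⟩

end TendstoWeaklyL1

theorem weak_limit_of_product_general (N : ℕ) (Ω : Set (Fin N → ℝ))
    (hΩbdd : Bornology.IsBounded Ω)
    (f g : ℕ → (Fin N → ℝ) → ℝ) (f₀ g₀ h : (Fin N → ℝ) → ℝ)
    (hf : ∀ n, IntegrableOn (f n) Ω) (hg : ∀ n, IntegrableOn (g n) Ω)
    (hf₀ : IntegrableOn f₀ Ω) (hg₀ : IntegrableOn g₀ Ω) (hh : IntegrableOn h Ω)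
    (hstrong : Tendsto (fun n => ∫ x in Ω, |f n x - f₀ x|) atTop (nhds 0))
    (hweakg : ∀ φ : (Fin N → ℝ) → ℝ, Measurable φ → (∃ C : ℝ, ∀ x, |φ x| ≤ C) →
      Tendsto (fun n => ∫ x in Ω, g n x * φ x) atTop (nhds (∫ x in Ω, g₀ x * φ x)))
    (hweakfg : ∀ φ : (Fin N → ℝ) → ℝ, Measurable φ → (∃ C : ℝ, ∀ x, |φ x| ≤ C) →
      Tendsto (fun n => ∫ x in Ω, f n x * g n x * φ x) atTop
        (nhds (∫ x in Ω, h x * φ x))) :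
    ∀ᵐ x ∂(volume.restrict Ω), h x = f₀ x * g₀ x := by
  have : IsFiniteMeasure (volume.restrict Ω) := isFiniteMeasure_restrict.2 hΩbdd.measure_lt_top.ne
  obtain ⟨F₀, hF₀, hf₀F₀⟩ := hf₀.aemeasurable
  obtain ⟨M, hM⟩ := TendstoWeaklyL1.exists_integral_abs_le hg hweakg
  obtain ⟨ns, hns, hae⟩ :=
    (tendstoInMeasure_of_tendsto_integral_abs_sub hf hf₀ hstrong).exists_seq_tendsto_ae
  have hprod : ∀ᵐ x ∂(volume.restrict Ω), h x = F₀ x * g₀ x := by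
    refine ae_of_forall_exists_measure_compl_le fun ε hε => ?_
    obtain ⟨S, hS, hSμ, hunif⟩ := exists_measure_compl_le_tendstoEssUniformlyOn
      (fun n => (hf (ns n)).1) hF₀.stronglyMeasurable
      (by filter_upwards [hae, hf₀F₀] with x hx hx' using hx' ▸ hx) hε
    exact ⟨S, hSμ, TendstoWeaklyL1.ae_eq_mul hS (fun n => (hf (ns n)).1) hF₀
      (fun n => hg (ns n)) hg₀ hh (fun n => hM (ns n)) hunif
      (TendstoWeaklyL1.comp_tendsto hweakg hns.tendsto_atTop)
      (TendstoWeaklyL1.comp_tendsto hweakfg hns.tendsto_atTop)⟩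
  filter_upwards [hprod, hf₀F₀] with x hx hx' using hx' ▸ hx

/-- Lemma of Jesslé–Novotný–Pokorný: on a bounded measurable `Ω ⊂ ℝᴺ`, if `f_n → f`
strongly in `L¹(Ω)`, `g_n ⇀ g` weakly in `L¹(Ω)` (tested against all bounded measurable
functions), and `f_n g_n ⇀ h` weakly in `L¹(Ω)`, then `h = f g` a.e. in `Ω`. -/
theorem weak_limit_of_product (N : ℕ) (Ω : Set (Fin N → ℝ))
    (hΩmeas : MeasurableSet Ω) (hΩbdd : Bornology.IsBounded Ω)
    (f g : ℕ → (Fin N → ℝ) → ℝ) (f₀ g₀ h : (Fin N → ℝ) → ℝ)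
    (hf : ∀ n, IntegrableOn (f n) Ω) (hg : ∀ n, IntegrableOn (g n) Ω)
    (hfg : ∀ n, IntegrableOn (fun x => f n x * g n x) Ω)
    (hf₀ : IntegrableOn f₀ Ω) (hg₀ : IntegrableOn g₀ Ω) (hh : IntegrableOn h Ω)
    (hstrong : Tendsto (fun n => ∫ x in Ω, |f n x - f₀ x|) atTop (nhds 0))
    (hweakg : ∀ φ : (Fin N → ℝ) → ℝ, Measurable φ → (∃ C : ℝ, ∀ x, |φ x| ≤ C) →
      Tendsto (fun n => ∫ x in Ω, g n x * φ x) atTop (nhds (∫ x in Ω, g₀ x * φ x)))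
    (hweakfg : ∀ φ : (Fin N → ℝ) → ℝ, Measurable φ → (∃ C : ℝ, ∀ x, |φ x| ≤ C) →
      Tendsto (fun n => ∫ x in Ω, f n x * g n x * φ x) atTop
        (nhds (∫ x in Ω, h x * φ x))) :
    ∀ᵐ x ∂(volume.restrict Ω), h x = f₀ x * g₀ x :=
  weak_limit_of_product_general N Ω hΩbdd f g f₀ g₀ h hf hg hf₀ hg₀ hh hstrong hweakg hweakfg
end

section
/- Let Ω ⊆ ℝ³ be open, α ∈ (0, 1), a = 2/(2 − α), x₀ ∈ ℝ³, and let d : Ω → (0, ∞) be twice continuously differentiable. Define φ¹ : Ω → ℝ³ by φ¹(x) = d(x) ∇d(x) (d(x) + |x − x₀|^a)^{−α}. Then for every x ∈ Ω with x ≠ x₀ and all i, j ∈ {1,2,3}: ∂_j φ¹_i(x) = d ∂²_{ij} d / (d + |x−x₀|^a)^{α} + [((1−α) d + |x−x₀|^a) / (2 (d + |x−x₀|^a)^{1+α})] ∂_i d ∂_j d + [((1−α) d + |x−x₀|^a) / (2 (d + |x−x₀|^a)^{1+α})] (∂_i d − μ^i)(∂_j d − μ^j) + [α d (∂_j d ∂_i(|x−x₀|^a)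 − ∂_i d ∂_j(|x−x₀|^a))] / (2 (d + |x−x₀|^a)^{1+α}) − [α² d² ∂_i(|x−x₀|^a) ∂_j(|x−x₀|^a)] / (2 (d + |x−x₀|^a)^{1+α} ((1−α) d + |x−x₀|^a)), where μ^i(x) = α d(x) ((1−α) d(x) + |x−x₀|^a)^{−1} ∂_i(|x−x₀|^a) and all functions on the right are evaluated at x. -/
/-!
Write `r = |x − x₀|^a`, `S = d + r` and `T = (1 − α) d + r`. The product and chain rules give
`∂_j φ¹_i = (d ∂²_{ij} d + ∂_i d ∂_j d) S^{−α} − α d ∂_i d (∂_j d + ∂_j r) S^{−α−1}`.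
Since `S − α d = T`, the first-order part is `S^{−1−α} (T ∂_i d ∂_j d − α d ∂_i d ∂_j r)`;
splitting off its antisymmetric part and completing the square in `∂d − μ`, `μ = α d ∂r / T`,
gives the decomposition. Beyond differentiability, only `S > 0` and `T ≠ 0` are used.
-/

open EuclideanSpace

/-- `i`-th partial derivative of a scalar function on `ℝ³`. -/
noncomputable def partialDeriv3 (f : EuclideanSpace ℝ (Fin 3) → ℝ) (i : Fin 3)
    (x : EuclideanSpace ℝ (Fin 3)) : ℝ :=
  fderiv ℝ f x (EuclideanSpace.single i 1)

theorem ContDiffAt.differentiableAt_fderiv_apply {E F : Type*}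
    [NormedAddCommGroup E] [NormedSpace ℝ E] [NormedAddCommGroup F] [NormedSpace ℝ F]
    {f : E → F} {x : E} (hf : ContDiffAt ℝ 2 f x) (v : E) :
    DifferentiableAt ℝ (fun y => fderiv ℝ f y v) x :=
  ((hf.fderiv_right (by norm_num)).clm_apply contDiffAt_const).differentiableAt one_ne_zero

theorem fderiv_mul_mul_add_rpow_neg_apply {E : Type*} [NormedAddCommGroup E] [NormedSpace ℝ E]
    {f p r : E → ℝ} {x : E} (hf : DifferentiableAt ℝ f x) (hp : DifferentiableAt ℝ p x)
    (hr : DifferentiableAt ℝ r x) (hS : f x + r x ≠ 0) (α : ℝ) (v : E) :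
    fderiv ℝ (fun y => f y * p y * (f y + r y) ^ (-α)) x v
      = f x * p x * (-α * (f x + r x) ^ (-α - 1) * (fderiv ℝ f x v + fderiv ℝ r x v))
        + (f x + r x) ^ (-α) * (f x * fderiv ℝ p x v + p x * fderiv ℝ f x v) := by
  have hpow := (hf.hasFDerivAt.add hr.hasFDerivAt).rpow_const (p := -α) (Or.inl hS)
  have h : HasFDerivAt (fun y => f y * p y * (f y + r y) ^ (-α)) _ x :=
    (hf.hasFDerivAt.mul hp.hasFDerivAt).mul hpow
  rw [h.fderiv]
  simp only [add_apply, smul_apply, smul_eq_mul, Pi.mul_apply, Pi.add_apply]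

theorem product_rule_eq_completed_square (α A δ ρ h di dj ri rj : ℝ) (hA : A ≠ 0)
    (hS : δ + ρ ≠ 0) (hT : (1 - α) * δ + ρ ≠ 0) :
    δ * di * (-α * ((δ + ρ) * A)⁻¹ * (dj + rj)) + A⁻¹ * (δ * h + di * dj)
      = δ * h / A
        + ((1 - α) * δ + ρ) / (2 * ((δ + ρ) * A)) * (di * dj)
        + ((1 - α) * δ + ρ) / (2 * ((δ + ρ) * A))
            * ((di - α * δ * ((1 - α) * δ + ρ)⁻¹ * ri)
               * (dj - α * δ * ((1 - α) * δ + ρ)⁻¹ * rj))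
        + α * δ * (dj * ri - di * rj) / (2 * ((δ + ρ) * A))
        - α ^ 2 * δ ^ 2 * ri * rj / (2 * ((δ + ρ) * A) * ((1 - α) * δ + ρ)) := by
  -- kept atomic, otherwise `field_simp` normalises it and no longer clears it as a denominator
  set T := (1 - α) * δ + ρ with hT_def
  field_simp
  rw [hT_def]
  ring

theorem rpow_product_rule_eq_completed_square (α δ ρ h di dj ri rj : ℝ) (hS : 0 < δ + ρ)
    (hT : (1 - α) * δ + ρ ≠ 0) :
    δ * di * (-α * (δ + ρ) ^ (-α - 1) * (dj + rj)) + (δ + ρ) ^ (-α) * (δ * h + di * dj)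
      = δ * h / (δ + ρ) ^ α
        + ((1 - α) * δ + ρ) / (2 * (δ + ρ) ^ (1 + α)) * (di * dj)
        + ((1 - α) * δ + ρ) / (2 * (δ + ρ) ^ (1 + α))
            * ((di - α * δ * ((1 - α) * δ + ρ)⁻¹ * ri)
               * (dj - α * δ * ((1 - α) * δ + ρ)⁻¹ * rj))
        + α * δ * (dj * ri - di * rj) / (2 * (δ + ρ) ^ (1 + α))
        - α ^ 2 * δ ^ 2 * ri * rj / (2 * (δ + ρ) ^ (1 + α) * ((1 - α) * δ + ρ)) := by
  have hsucc : (δ + ρ) ^ (1 + α) = (δ + ρ) * (δ + ρ) ^ α := by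
    rw [Real.rpow_add hS, Real.rpow_one]
  rw [show -α - 1 = -(1 + α) by ring, Real.rpow_neg hS.le, Real.rpow_neg hS.le, hsucc]
  exact product_rule_eq_completed_square α _ δ ρ h di dj ri rj
    (Real.rpow_pos_of_pos hS α).ne' hS.ne' hT

theorem jacobian_boundary_test_function_general
    (Ω : Set (EuclideanSpace ℝ (Fin 3))) (hΩ : IsOpen Ω)
    (α a : ℝ) (hα1 : α < 1)
    (x₀ : EuclideanSpace ℝ (Fin 3))
    (d : EuclideanSpace ℝ (Fin 3) → ℝ)
    (hd : ContDiffOn ℝ 2 d Ω) (hdpos : ∀ x ∈ Ω, 0 < d x) :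
    ∀ x ∈ Ω, x ≠ x₀ → ∀ i j : Fin 3,
      fderiv ℝ
          (fun y => d y * partialDeriv3 d i y * (d y + ‖y - x₀‖ ^ a) ^ (-α)) x
          (EuclideanSpace.single j 1)
        = d x * (fderiv ℝ (fun y => partialDeriv3 d i y) x (EuclideanSpace.single j 1))
              / (d x + ‖x - x₀‖ ^ a) ^ α
          + ((1 - α) * d x + ‖x - x₀‖ ^ a) / (2 * (d x + ‖x - x₀‖ ^ a) ^ (1 + α))
              * (partialDeriv3 d i x * partialDeriv3 d j x)
          + ((1 - α) * d x + ‖x - x₀‖ ^ a) / (2 * (d x + ‖x - x₀‖ ^ a) ^ (1 + α))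
              * ((partialDeriv3 d i x
                    - α * d x * ((1 - α) * d x + ‖x - x₀‖ ^ a)⁻¹
                        * partialDeriv3 (fun y => ‖y - x₀‖ ^ a) i x)
                 * (partialDeriv3 d j x
                    - α * d x * ((1 - α) * d x + ‖x - x₀‖ ^ a)⁻¹
                        * partialDeriv3 (fun y => ‖y - x₀‖ ^ a) j x))
          + α * d x * (partialDeriv3 d j x * partialDeriv3 (fun y => ‖y - x₀‖ ^ a) i x
                - partialDeriv3 d i x * partialDeriv3 (fun y => ‖y - x₀‖ ^ a) j x)
              / (2 * (d x + ‖x - x₀‖ ^ a) ^ (1 + α))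
          - α ^ 2 * d x ^ 2 * partialDeriv3 (fun y => ‖y - x₀‖ ^ a) i x
                * partialDeriv3 (fun y => ‖y - x₀‖ ^ a) j x
              / (2 * (d x + ‖x - x₀‖ ^ a) ^ (1 + α) * ((1 - α) * d x + ‖x - x₀‖ ^ a)) := by
  intro x hx hxne i j
  have hdx : ContDiffAt ℝ 2 d x := hd.contDiffAt (hΩ.mem_nhds hx)
  have hdist : 0 < ‖x - x₀‖ := norm_pos_iff.mpr (sub_ne_zero.mpr hxne)
  have hr : DifferentiableAt ℝ (fun y => ‖y - x₀‖ ^ a) x :=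
    ((differentiableAt_id.sub_const x₀).norm ℝ (sub_ne_zero.mpr hxne)).rpow_const
      (Or.inl hdist.ne')
  have hrpos : 0 < ‖x - x₀‖ ^ a := Real.rpow_pos_of_pos hdist a
  have hS : 0 < d x + ‖x - x₀‖ ^ a := add_pos (hdpos x hx) hrpos
  have hT : 0 < (1 - α) * d x + ‖x - x₀‖ ^ a :=
    add_pos (mul_pos (sub_pos.mpr hα1) (hdpos x hx)) hrpos
  exact (fderiv_mul_mul_add_rpow_neg_apply (hdx.differentiableAt (by norm_num))
    (hdx.differentiableAt_fderiv_apply _) hr hS.ne' α _).trans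
    (rpow_product_rule_eq_completed_square α _ _ _ _ _ _ _ hS hT.ne')

/-- Jacobian decomposition of the boundary test function
`φ¹(x) = d(x) ∇d(x) (d(x) + |x − x₀|^a)^{−α}` with `a = 2/(2 − α)`, `α ∈ (0,1)`,
`d : Ω → (0,∞)` twice continuously differentiable: for `x ∈ Ω`, `x ≠ x₀`,
`∂_j φ¹_i(x)` equals the displayed five-term expression, where
`μ^i = α d ((1−α)d + |x−x₀|^a)^{−1} ∂_i(|x−x₀|^a)`. -/
theorem jacobian_boundary_test_function
    (Ω : Set (EuclideanSpace ℝ (Fin 3))) (hΩ : IsOpen Ω)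
    (α a : ℝ) (hα0 : 0 < α) (hα1 : α < 1) (ha : a = 2 / (2 - α))
    (x₀ : EuclideanSpace ℝ (Fin 3))
    (d : EuclideanSpace ℝ (Fin 3) → ℝ)
    (hd : ContDiffOn ℝ 2 d Ω) (hdpos : ∀ x ∈ Ω, 0 < d x) :
    ∀ x ∈ Ω, x ≠ x₀ → ∀ i j : Fin 3,
      fderiv ℝ
          (fun y => d y * partialDeriv3 d i y * (d y + ‖y - x₀‖ ^ a) ^ (-α)) x
          (EuclideanSpace.single j 1)
        = d x * (fderiv ℝ (fun y => partialDeriv3 d i y) x (EuclideanSpace.single j 1))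
              / (d x + ‖x - x₀‖ ^ a) ^ α
          + ((1 - α) * d x + ‖x - x₀‖ ^ a) / (2 * (d x + ‖x - x₀‖ ^ a) ^ (1 + α))
              * (partialDeriv3 d i x * partialDeriv3 d j x)
          + ((1 - α) * d x + ‖x - x₀‖ ^ a) / (2 * (d x + ‖x - x₀‖ ^ a) ^ (1 + α))
              * ((partialDeriv3 d i x
                    - α * d x * ((1 - α) * d x + ‖x - x₀‖ ^ a)⁻¹
                        * partialDeriv3 (fun y => ‖y - x₀‖ ^ a) i x)
                 * (partialDeriv3 d j x
                    - α * d x * ((1 - α) * d x + ‖x - x₀‖ ^ a)⁻¹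
                        * partialDeriv3 (fun y => ‖y - x₀‖ ^ a) j x))
          + α * d x * (partialDeriv3 d j x * partialDeriv3 (fun y => ‖y - x₀‖ ^ a) i x
                - partialDeriv3 d i x * partialDeriv3 (fun y => ‖y - x₀‖ ^ a) j x)
              / (2 * (d x + ‖x - x₀‖ ^ a) ^ (1 + α))
          - α ^ 2 * d x ^ 2 * partialDeriv3 (fun y => ‖y - x₀‖ ^ a) i x
                * partialDeriv3 (fun y => ‖y - x₀‖ ^ a) j x
              / (2 * (d x + ‖x - x₀‖ ^ a) ^ (1 + α) * ((1 - α) * d x + ‖x - x₀‖ ^ a)) :=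
  jacobian_boundary_test_function_general Ω hΩ α a hα1 x₀ d hd hdpos
end
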